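/- Let k₁, k₂ ∈ ℕ, k₃ ∈ ℕ with k₃ ≥ 1, and define w : ℝ³ → ℝ by w(x) = cos(2πk₁x₁/l₁)·cos(2πk₂x₂/l₂)·sin(πk₃x₃/l₃⁺), and the vector fields H := (0, ∂₃w, −∂₂w) and E := (−iωε)⁻¹·(−∂₂²w − ∂₃²w, ∂₁∂₂w, ∂₁∂₃w). If ω² = (4π²/(εμ))·(k₁²/l₁² + k₂²/l₂² + k₃²/(4(l₃⁺)²)), then curl E(x) = iωμ·H(x) for every x ∈ ℝ³. -/

import Mathlib

/-! The field `w = cos(a x₁) cos(b x₂) sin(c x₃)`, with `a = 2πk₁/l₁`, `b = 2πk₂/l₂`,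
`c = πk₃/l₃⁺`, separates variables, and every partial derivative of a product
`z · g(x₁) h(x₂) k(x₃)` of such cosines and sines is again one, with `∂ⱼ²` acting as
multiplication by `-a²`, `-b²` or `-c²`. Computing `curl E` this way, the first component
cancels and the other two are `(-iωε)⁻¹ (a² + b² + c²)` times those of `H`. The resonance
condition says precisely `a² + b² + c² = εμω²`, which turns this factor into `iωμ`. -/

open Real Complex Filter Topology

/-- Partial derivative in the first coordinate. -/
noncomputable def pd1 {F : Type*} [NormedAddCommGroup F] [NormedSpace ℝ F]
    (f : ℝ × ℝ × ℝ → F) (x : ℝ × ℝ × ℝ) : F :=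
  deriv (fun t => f (t, x.2.1, x.2.2)) x.1

/-- Partial derivative in the second coordinate. -/
noncomputable def pd2 {F : Type*} [NormedAddCommGroup F] [NormedSpace ℝ F]
    (f : ℝ × ℝ × ℝ → F) (x : ℝ × ℝ × ℝ) : F :=
  deriv (fun t => f (x.1, t, x.2.2)) x.2.1

/-- Partial derivative in the third coordinate. -/
noncomputable def pd3 {F : Type*} [NormedAddCommGroup F] [NormedSpace ℝ F]
    (f : ℝ × ℝ × ℝ → F) (x : ℝ × ℝ × ℝ) : F :=
  deriv (fun t => f (x.1, x.2.1, t)) x.2.2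

/-- Curl of a complex vector field on ℝ³. -/
noncomputable def curl3 (F : ℝ × ℝ × ℝ → ℂ × ℂ × ℂ) (x : ℝ × ℝ × ℝ) : ℂ × ℂ × ℂ :=
  (pd2 (fun y => (F y).2.2) x - pd3 (fun y => (F y).2.1) x,
   pd3 (fun y => (F y).1) x - pd1 (fun y => (F y).2.2) x,
   pd1 (fun y => (F y).2.1) x - pd2 (fun y => (F y).1) x)

/-- Divergence of a complex vector field on ℝ³. -/
noncomputable def div3 (F : ℝ × ℝ × ℝ → ℂ × ℂ × ℂ) (x : ℝ × ℝ × ℝ) : ℂ :=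
  pd1 (fun y => (F y).1) x + pd2 (fun y => (F y).2.1) x + pd3 (fun y => (F y).2.2) x

/-- Laplacian of a scalar function on ℝ³. -/
noncomputable def lap {F : Type*} [NormedAddCommGroup F] [NormedSpace ℝ F]
    (f : ℝ × ℝ × ℝ → F) (x : ℝ × ℝ × ℝ) : F :=
  pd1 (pd1 f) x + pd2 (pd2 f) x + pd3 (pd3 f) x

/-- Gradient of a complex scalar function on ℝ³. -/
noncomputable def grad3 (f : ℝ × ℝ × ℝ → ℂ) (x : ℝ × ℝ × ℝ) : ℂ × ℂ × ℂ :=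
  (pd1 f x, pd2 f x, pd3 f x)

lemma hasDerivAt_cos_mul (a t : ℝ) :
    HasDerivAt (fun u => Real.cos (a * u)) (-a * Real.sin (a * t)) t := by
  simpa [mul_comm] using ((hasDerivAt_id t).const_mul a).cos

lemma hasDerivAt_sin_mul (a t : ℝ) :
    HasDerivAt (fun u => Real.sin (a * u)) (a * Real.cos (a * t)) t := by
  simpa [mul_comm] using ((hasDerivAt_id t).const_mul a).sin

def sepProd (z : ℂ) (g h k : ℝ → ℝ) (y : ℝ × ℝ × ℝ) : ℂ :=
  z * ((g y.1 * h y.2.1 * k y.2.2 : ℝ) : ℂ)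

section sepProd

variable {z : ℂ} {g h k g₂ : ℝ → ℝ} {α : ℝ}

-- Splitting off the constant `α` keeps the modes in the family `cos (a ·)`, `sin (a ·)`.
lemma pd1_sepProd (hg : ∀ t, HasDerivAt g (α * g₂ t) t) :
    pd1 (sepProd z g h k) = sepProd (z * α) g₂ h k := by
  funext x
  refine ((((hg x.1).mul_const (h x.2.1)).mul_const (k x.2.2)).ofReal_comp.const_mul z).deriv.trans
    ?_
  simp only [sepProd]; push_cast; ring

lemma pd2_sepProd (hh : ∀ t, HasDerivAt h (α * g₂ t) t) :
    pd2 (sepProd z g h k) = sepProd (z * α) g g₂ k := by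
  funext x
  refine ((((hh x.2.1).const_mul (g x.1)).mul_const (k x.2.2)).ofReal_comp.const_mul z).deriv.trans
    ?_
  simp only [sepProd]; push_cast; ring

lemma pd3_sepProd (hk : ∀ t, HasDerivAt k (α * g₂ t) t) :
    pd3 (sepProd z g h k) = sepProd (z * α) g h g₂ := by
  funext x
  refine (((hk x.2.2).const_mul (g x.1 * h x.2.1)).ofReal_comp.const_mul z).deriv.trans ?_
  simp only [sepProd]; push_cast; ring

lemma sepProd_sub (z' : ℂ) (y : ℝ × ℝ × ℝ) :
    sepProd (z - z') g h k y = sepProd z g h k y - sepProd z' g h k y :=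
  sub_mul _ _ _

lemma sepProd_neg (y : ℝ × ℝ × ℝ) : sepProd (-z) g h k y = -sepProd z g h k y :=
  neg_mul _ _

lemma sepProd_mul (w : ℂ) (y : ℝ × ℝ × ℝ) : sepProd (w * z) g h k y = w * sepProd z g h k y :=
  mul_assoc _ _ _

end sepProd

lemma curl3_eq_smul_of_eq_sepProd (a b c : ℝ) (s : ℂ) {w : ℝ × ℝ × ℝ → ℂ}
    (hw : w = sepProd 1 (fun t => Real.cos (a * t)) (fun t => Real.cos (b * t))
      (fun t => Real.sin (c * t))) (x : ℝ × ℝ × ℝ) :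
    curl3 (fun y => s • (-(pd2 (pd2 w) y) - pd3 (pd3 w) y, pd1 (pd2 w) y, pd1 (pd3 w) y)) x
      = (s * (a ^ 2 + b ^ 2 + c ^ 2 : ℝ)) • (0, pd3 w x, -(pd2 w x)) := by
  have hE : (fun y => s • (-(pd2 (pd2 w) y) - pd3 (pd3 w) y, pd1 (pd2 w) y, pd1 (pd3 w) y)) =
      fun y =>
      (sepProd (s * (b ^ 2 + c ^ 2 : ℝ)) (fun t => Real.cos (a * t)) (fun t => Real.cos (b * t))
        (fun t => Real.sin (c * t)) y,
       sepProd (s * (a * b : ℝ)) (fun t => Real.sin (a * t)) (fun t => Real.sin (b * t))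
        (fun t => Real.sin (c * t)) y,
       sepProd (-s * (a * c : ℝ)) (fun t => Real.sin (a * t)) (fun t => Real.cos (b * t))
        (fun t => Real.cos (c * t)) y) := by
    funext y
    simp only [hw, pd1_sepProd (hasDerivAt_cos_mul a), pd2_sepProd (hasDerivAt_cos_mul b),
      pd2_sepProd (hasDerivAt_sin_mul b), pd3_sepProd (hasDerivAt_sin_mul c),
      pd3_sepProd (hasDerivAt_cos_mul c), Prod.smul_mk, smul_eq_mul, sepProd]
    push_cast
    refine Prod.ext ?_ (Prod.ext ?_ ?_) <;> ring
  rw [hE]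
  simp only [curl3, hw, pd1_sepProd (hasDerivAt_sin_mul a),
    pd2_sepProd (hasDerivAt_cos_mul b), pd3_sepProd (hasDerivAt_sin_mul c), Prod.smul_mk,
    smul_eq_mul, Prod.mk.injEq]
  refine ⟨?_, ?_, ?_⟩
  · rw [mul_zero, sub_eq_zero]; congr 1; push_cast; ring
  · rw [← sepProd_sub, ← sepProd_mul]; congr 1; push_cast; ring
  · rw [← sepProd_sub, ← sepProd_neg, ← sepProd_mul]; congr 1; push_cast; ring

theorem stmt4_general (l₁ l₂ l₃p ε μ ω : ℝ)
    (hε : 0 < ε) (hμ : 0 < μ) (hω : 0 < ω)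
    (k₁ k₂ k₃ : ℕ)
    (hω2 : ω ^ 2 = 4 * π ^ 2 / (ε * μ) * ((k₁ : ℝ) ^ 2 / l₁ ^ 2 + (k₂ : ℝ) ^ 2 / l₂ ^ 2
        + (k₃ : ℝ) ^ 2 / (4 * l₃p ^ 2)))
    (w : ℝ × ℝ × ℝ → ℂ)
    (hw : w = fun x => ((Real.cos (2 * π * (k₁ : ℝ) * x.1 / l₁) *
        Real.cos (2 * π * (k₂ : ℝ) * x.2.1 / l₂) *
        Real.sin (π * (k₃ : ℝ) * x.2.2 / l₃p) : ℝ) : ℂ))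
    (E H : ℝ × ℝ × ℝ → ℂ × ℂ × ℂ)
    (hH : H = fun x => (0, pd3 w x, -(pd2 w x)))
    (hE : E = fun x => (-(Complex.I * (ω : ℂ) * (ε : ℂ)))⁻¹ •
        ((-(pd2 (pd2 w) x) - pd3 (pd3 w) x, pd1 (pd2 w) x, pd1 (pd3 w) x) : ℂ × ℂ × ℂ)) :
    ∀ x : ℝ × ℝ × ℝ, curl3 E x = (Complex.I * (ω : ℂ) * (μ : ℂ)) • H x := by
  set a : ℝ := 2 * π * k₁ / l₁
  set b : ℝ := 2 * π * k₂ / l₂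
  set c : ℝ := π * k₃ / l₃p
  have hw' : w = sepProd 1 (fun t => Real.cos (a * t)) (fun t => Real.cos (b * t))
      (fun t => Real.sin (c * t)) := by
    funext y
    simp only [hw, sepProd, one_mul, a, b, c, div_mul_eq_mul_div]
  have hdispersion : a ^ 2 + b ^ 2 + c ^ 2 = ε * μ * ω ^ 2 := by
    rw [hω2, ← mul_assoc, mul_div_cancel₀ _ (by positivity)]
    simp only [a, b, c, div_pow, mul_pow]
    ring
  have hcoeff : (-(Complex.I * ω * ε))⁻¹ * ((a ^ 2 + b ^ 2 + c ^ 2 : ℝ) : ℂ)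
      = Complex.I * ω * μ := by
    have : -(Complex.I * ω * ε) ≠ 0 := by simp [hω.ne', hε.ne']
    rw [hdispersion, inv_mul_eq_div, div_eq_iff this]
    push_cast
    linear_combination (ω ^ 2 * μ * ε : ℂ) * Complex.I_sq
  intro x
  rw [hE, hH, curl3_eq_smul_of_eq_sepProd a b c _ hw', hcoeff]

/-- `curl E = iωμ H` under the resonance condition for the upper half. -/
theorem stmt4 (l₁ l₂ l₃p l₃m ε μ ω : ℝ)
    (hl₁ : 0 < l₁) (hl₂ : 0 < l₂) (hl₃p : 0 < l₃p) (hl₃m : 0 < l₃m)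
    (hε : 0 < ε) (hμ : 0 < μ) (hω : 0 < ω)
    (k₁ k₂ k₃ : ℕ) (hk₃ : 1 ≤ k₃)
    (hω2 : ω ^ 2 = 4 * π ^ 2 / (ε * μ) * ((k₁ : ℝ) ^ 2 / l₁ ^ 2 + (k₂ : ℝ) ^ 2 / l₂ ^ 2
        + (k₃ : ℝ) ^ 2 / (4 * l₃p ^ 2)))
    (w : ℝ × ℝ × ℝ → ℂ)
    (hw : w = fun x => ((Real.cos (2 * π * (k₁ : ℝ) * x.1 / l₁) *
        Real.cos (2 * π * (k₂ : ℝ) * x.2.1 / l₂) *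
        Real.sin (π * (k₃ : ℝ) * x.2.2 / l₃p) : ℝ) : ℂ))
    (E H : ℝ × ℝ × ℝ → ℂ × ℂ × ℂ)
    (hH : H = fun x => (0, pd3 w x, -(pd2 w x)))
    (hE : E = fun x => (-(Complex.I * (ω : ℂ) * (ε : ℂ)))⁻¹ •
        ((-(pd2 (pd2 w) x) - pd3 (pd3 w) x, pd1 (pd2 w) x, pd1 (pd3 w) x) : ℂ × ℂ × ℂ)) :
    ∀ x : ℝ × ℝ × ℝ, curl3 E x = (Complex.I * (ω : ℂ) * (μ : ℂ)) • H x :=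
  stmt4_general l₁ l₂ l₃p ε μ ω hε hμ hω k₁ k₂ k₃ hω2 w hw E H hH hE
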